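/- Let r,k ∈ ℕ with k ≥ 1, let φ be a first-order formula in the language of graphs with free variables indexed by Fin k that is semantically r-local and 2r-centered, and let G be a simple graph on a finite vertex type V. Then the number of tuples ā ∈ V^k with G ⊨ φ(ā) equals ∑_{a ∈ V} |{ā ∈ (B_a)^k : the first coordinate of ā is a, and the induced subgraph G[B_a] satisfies φ at the corresponding tuple}|, where B_a = N_{(2k−1)r}(a). -/

import Mathlib

open FirstOrder

universe u

/-- `distLE G r a b` : there is a walk in `G` from `a` to `b` of length at most `r`. -/
def distLE {V : Type*} (G : SimpleGraph V) (r : ℕ) (a b : V) : Prop :=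
  ∃ w : G.Walk a b, w.length ≤ r

/-- The `r`-ball around a vertex `a`. -/
def ball {V : Type*} (G : SimpleGraph V) (r : ℕ) (a : V) : Set V :=
  {b | distLE G r a b}

/-- The `r`-neighborhood of a tuple: `⋃ i, N_r(a i)`. -/
def tball {V : Type*} (G : SimpleGraph V) (r : ℕ) {k : ℕ} (a : Fin k → V) : Set V :=
  ⋃ i, ball G r (a i)

theorem mem_tball {V : Type*} (G : SimpleGraph V) (r : ℕ) {k : ℕ} (a : Fin k → V)
    (i : Fin k) : a i ∈ tball G r a :=
  Set.mem_iUnion.2 ⟨i, SimpleGraph.Walk.nil, by simp⟩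

/-- A formula with `k` free variables is semantically `r`-local if its truth value at a
tuple only depends on the graph induced on the `r`-neighborhood of the tuple. -/
def SemLocal (r k : ℕ) (φ : Language.graph.Formula (Fin k)) : Prop :=
  ∀ (V : Type u) (G : SimpleGraph V) (a : Fin k → V),
    (letI := G.structure
     φ.Realize a) ↔
      (letI := (G.induce (tball G r a)).structure
       φ.Realize (fun i => (⟨a i, mem_tball G r a i⟩ : tball G r a)))

/-- The `r`-distance type (closeness graph) of a tuple `a : Fin k → V`:
an edge between `i ≠ j` iff `dist_G (a i) (a j) ≤ r`. -/
def closeGraph {V : Type*} (G : SimpleGraph V) (r : ℕ) {k : ℕ} (a : Fin k → V) :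
    SimpleGraph (Fin k) where
  Adj i j := i ≠ j ∧ distLE G r (a i) (a j)
  symm := by
    constructor
    rintro i j ⟨hij, w, hw⟩
    exact ⟨hij.symm, w.reverse, by simpa using hw⟩
  loopless := by constructor; rintro i ⟨hii, -⟩; exact hii rfl

/-- A formula of arity `k` is `2r`-centered if whenever it holds at a tuple, the
`2r`-distance type of the tuple is connected. -/
def Centered (r k : ℕ) (φ : Language.graph.Formula (Fin k)) : Prop :=
  ∀ (V : Type u) (G : SimpleGraph V) (a : Fin k → V),
    (letI := G.structure
     φ.Realize a) → (closeGraph G (2 * r) a).Connected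

/-!
Centredness forces every satisfying tuple `ā` to have all its entries within distance
`(k - 1) · 2r` of `a₀`, since a path in the `2r`-closeness graph has fewer than `k` edges.
Hence the `r`-balls of the tuple lie in `B = N_{(2k-1)r}(a₀)`, and `r`-locality lets us evaluate
`φ` in `G[B]` instead of `G`. Conversely, a tuple of `B` satisfying `φ` in `G[B]` is centred there,
hence also in `G`, so the same argument brings it back to `G`. Grouping the tuples by their first
entry gives the formula.
-/

open SimpleGraph (Walk Embedding)

section Distance

variable {W : Type*} {G : SimpleGraph W} {m n : ℕ} {a b c : W}

lemma distLE.refl (n : ℕ) (a : W) : distLE G n a a := ⟨.nil, Nat.zero_le n⟩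

lemma distLE.mono (h : m ≤ n) (hab : distLE G m a b) : distLE G n a b :=
  let ⟨w, hw⟩ := hab; ⟨w, hw.trans h⟩

lemma distLE.trans (hab : distLE G m a b) (hbc : distLE G n b c) : distLE G (m + n) a c := by
  obtain ⟨w₁, h₁⟩ := hab
  obtain ⟨w₂, h₂⟩ := hbc
  exact ⟨w₁.append w₂, by rw [Walk.length_append]; omega⟩

lemma ball_subset_ball (hab : distLE G m a b) : ball G n b ⊆ ball G (m + n) a :=
  fun _ hx => hab.trans hx

lemma distLE.of_induce {s : Set W} {x y : s} (h : distLE (G.induce s) n x y) :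
    distLE G n x y := by
  obtain ⟨w, hw⟩ := h
  exact ⟨w.map (Embedding.induce s).toHom, (Walk.length_map _ w).trans_le hw⟩

lemma distLE.induce {s : Set W} (hab : distLE G n a b) (hs : ball G n a ⊆ s)
    (ha : a ∈ s) (hb : b ∈ s) : distLE (G.induce s) n ⟨a, ha⟩ ⟨b, hb⟩ := by
  classical
  obtain ⟨w, hw⟩ := hab
  have hsupp : ∀ x ∈ w.support, x ∈ s := fun x hx =>
    hs ⟨w.takeUntil x hx, (w.length_takeUntil_le_length hx).trans hw⟩
  refine ⟨w.induce s hsupp, ?_⟩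
  have hlen := congrArg Walk.length (w.map_induce hsupp)
  rw [Walk.length_map] at hlen
  exact hlen.trans_le hw

end Distance

section CloseGraph

variable {W : Type*} {G : SimpleGraph W} {r k : ℕ} {a : Fin k → W}

lemma distLE_of_closeGraph_walk : ∀ {i j : Fin k} (w : (closeGraph G r a).Walk i j),
    distLE G (w.length * r) (a i) (a j)
  | _, _, .nil => distLE.refl _ _
  | _, _, .cons h w => (h.2.trans (distLE_of_closeGraph_walk w)).mono (by
      rw [Walk.length_cons, Nat.succ_mul, Nat.add_comm])

lemma SimpleGraph.Connected.distLE_of_closeGraph (hc : (closeGraph G r a).Connected) (i j : Fin k) :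
    distLE G ((k - 1) * r) (a i) (a j) := by
  obtain ⟨p, hp⟩ := (hc i j).some.toPath
  have hlen : p.length < k := by simpa using hp.length_lt
  exact (distLE_of_closeGraph_walk p).mono (Nat.mul_le_mul_right r (by omega))

lemma ball_subset_ball_of_connected (hk : 0 < k) (hc : (closeGraph G (2 * r) a).Connected)
    (i : Fin k) : ball G r (a i) ⊆ ball G ((2 * k - 1) * r) (a ⟨0, hk⟩) := by
  have hradius : (k - 1) * (2 * r) + r = (2 * k - 1) * r := by
    obtain ⟨n, rfl⟩ : ∃ n, k = n + 1 := ⟨k - 1, by omega⟩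
    rw [show 2 * (n + 1) - 1 = 2 * n + 1 by omega, Nat.add_sub_cancel]
    ring
  exact fun _ hx => hradius ▸ ball_subset_ball (hc.distLE_of_closeGraph ⟨0, hk⟩ i) hx

lemma closeGraph_induce_le {s : Set W} (t : Fin k → s) :
    closeGraph (G.induce s) r t ≤ closeGraph G r (fun i => (t i : W)) :=
  fun _ _ h => ⟨h.1, h.2.of_induce⟩

end CloseGraph

lemma SimpleGraph.Iso.realize_formula {A B : Type*} {GA : SimpleGraph A} {GB : SimpleGraph B}
    (f : GA ≃g GB) {α : Type*} (φ : Language.graph.Formula α) (v : α → A) :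
    (letI := GB.structure; φ.Realize (f ∘ v)) ↔ (letI := GA.structure; φ.Realize v) := by
  let := GA.structure
  let := GB.structure
  let e : A ≃[Language.graph] B :=
    { toEquiv := f.toEquiv
      map_fun' := fun F => isEmptyElim F
      map_rel' := by
        rintro n ⟨⟩ x
        exact f.map_adj_iff }
  exact Language.StrongHomClass.realize_formula e φ

lemma SemLocal.realize_induce_iff {r k : ℕ} {φ : Language.graph.Formula (Fin k)}
    (hloc : SemLocal.{u} r k φ) {V : Type u} (G : SimpleGraph V) (s : Set V) (b : Fin k → s)
    (hball : ∀ i, ball G r (b i) ⊆ s) :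
    (letI := (G.induce s).structure; φ.Realize b) ↔
      (letI := G.structure; φ.Realize (fun i => (b i : V))) := by
  set H := G.induce s
  have hmem : ∀ x : s, x ∈ tball H r b ↔ (x : V) ∈ tball G r (fun i => (b i : V)) := by
    intro x
    simp only [tball, ball, Set.mem_iUnion]
    exact ⟨fun ⟨i, hi⟩ => ⟨i, hi.of_induce⟩, fun ⟨i, hi⟩ => ⟨i, hi.induce (hball i) _ _⟩⟩
  have hsub : tball G r (fun i => (b i : V)) ⊆ s := Set.iUnion_subset hball
  -- the two `r`-neighbourhoods are the same vertex set, read inside `G[s]` and inside `G`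
  let f : H.induce (tball H r b) ≃g G.induce (tball G r (fun i => (b i : V))) :=
    { toFun := fun x => ⟨x.1, (hmem _).1 x.2⟩
      invFun := fun y => ⟨⟨y, hsub y.2⟩, (hmem _).2 y.2⟩
      left_inv := fun _ => rfl
      right_inv := fun _ => rfl
      map_rel_iff' := Iff.rfl }
  rw [hloc V G, hloc s H, ← f.realize_formula]
  rfl

section Counting

variable {V : Type u} {r k : ℕ} {φ : Language.graph.Formula (Fin k)}

lemma Centered.mem_ball (hcent : Centered.{u} r k φ) (hk : 0 < k) (G : SimpleGraph V)
    {b : Fin k → V} (hb : letI := G.structure; φ.Realize b) (i : Fin k) :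
    b i ∈ ball G ((2 * k - 1) * r) (b ⟨0, hk⟩) :=
  ball_subset_ball_of_connected hk (hcent V G b hb) i (distLE.refl r (b i))

lemma realize_induce_ball_iff (hloc : SemLocal.{u} r k φ) (hcent : Centered.{u} r k φ)
    (hk : 0 < k) (G : SimpleGraph V) {a : V} (t : Fin k → ball G ((2 * k - 1) * r) a)
    (ht : (t ⟨0, hk⟩ : V) = a) :
    (letI := (G.induce (ball G ((2 * k - 1) * r) a)).structure; φ.Realize t) ↔
      (letI := G.structure; φ.Realize (fun i => (t i : V))) := by
  suffices h : (closeGraph G (2 * r) (fun i => (t i : V))).Connected → (_ ↔ _) from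
    ⟨fun ht' => (h ((hcent _ _ t ht').mono (closeGraph_induce_le t))).1 ht',
      fun ht' => (h (hcent V G _ ht')).2 ht'⟩
  intro hc
  exact hloc.realize_induce_iff G _ t fun i =>
    (ball_subset_ball_of_connected hk hc i).trans_eq (congrArg (ball G _) ht)

lemma ncard_realize_induce_ball (hloc : SemLocal.{u} r k φ) (hcent : Centered.{u} r k φ)
    (hk : 0 < k) (G : SimpleGraph V) (a : V) :
    {t : Fin k → ball G ((2 * k - 1) * r) a |
      (t ⟨0, hk⟩ : V) = a ∧
      (letI := (G.induce (ball G ((2 * k - 1) * r) a)).structure; φ.Realize t)}.ncard =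
      {b : Fin k → V | (letI := G.structure; φ.Realize b) ∧ b ⟨0, hk⟩ = a}.ncard := by
  have hinj : Function.Injective
      (fun (t : Fin k → ball G ((2 * k - 1) * r) a) i => (t i : V)) :=
    fun _ _ h => funext fun i => Subtype.ext (congrFun h i)
  rw [← Set.ncard_image_of_injective _ hinj]
  congr 1
  ext b
  constructor
  · rintro ⟨t, ⟨ht, hreal⟩, rfl⟩
    exact ⟨(realize_induce_ball_iff hloc hcent hk G t ht).1 hreal, ht⟩
  · rintro ⟨hreal, rfl⟩
    let t : Fin k → ball G ((2 * k - 1) * r) (b ⟨0, hk⟩) :=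
      fun i => ⟨b i, hcent.mem_ball hk G hreal i⟩
    exact ⟨t, ⟨rfl, (realize_induce_ball_iff hloc hcent hk G t rfl).2 hreal⟩, rfl⟩

end Counting

theorem stmt_15 {V : Type u} [Fintype V] (r k : ℕ) (hk : 0 < k)
    (φ : Language.graph.Formula (Fin k))
    (hloc : SemLocal.{u} r k φ) (hcent : Centered.{u} r k φ)
    (G : SimpleGraph V) :
    {a : Fin k → V | (letI := G.structure; φ.Realize a)}.ncard =
      ∑ a : V,
        {t : Fin k → ball G ((2 * k - 1) * r) a |
          (t ⟨0, hk⟩ : V) = a ∧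
          (letI := (G.induce (ball G ((2 * k - 1) * r) a)).structure
           φ.Realize t)}.ncard := by
  classical
  rw [Set.ncard_eq_toFinset_card', Finset.card_eq_sum_card_fiberwise
    (f := fun b : Fin k → V => b ⟨0, hk⟩) (t := Finset.univ) fun _ _ => Finset.mem_univ _]
  refine Finset.sum_congr rfl fun a _ => ?_
  rw [ncard_realize_induce_ball hloc hcent hk G a, Set.ncard_eq_toFinset_card']
  congr 1
  ext b
  simp
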